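/- Every vertex of Q_n satisfies the equations: for each 0 ≤ l ≤ n−1, the sum of coordinates x_{ln},...,x_{(l+1)n−1} equals 1; and for all 0 ≤ j ≤ n−2, 0 ≤ k ≤ n−3, x_{kn+[j]_n} − x_{(k+1)n+[j]_n} − x_{(k+1)n+[j+1]_n} + x_{(k+2)n+[j+1]_n} = 0. These n + (n−1)(n−2) linear equations are linearly independent. -/
import Mathlib


open Matrix Finset

variable (n : ℕ) [NeZero n]

/-- Permutation matrix of `σ`: entries `δ_{i, σ(j)}`. -/
def permMat (σ : Equiv.Perm (ZMod n)) : Matrix (ZMod n) (ZMod n) ℝ :=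
  Matrix.of fun i j => if i = σ j then 1 else 0

/-- Rotation `x ↦ x + 1` of the regular n-gon with vertex set `ZMod n`. -/
def rot : Equiv.Perm (ZMod n) := Equiv.addRight 1

/-- Reflection `x ↦ -x` of the regular n-gon. -/
def rfl' : Equiv.Perm (ZMod n) := Equiv.neg (ZMod n)

/-- The dihedral group `D_n ≤ S_n`, symmetries of the regular n-gon. -/
def dihedral : Subgroup (Equiv.Perm (ZMod n)) := Subgroup.closure {rot n, rfl' n}

/-- Adjacency matrix of the n-cycle `C_n`. -/
def cycAdj : Matrix (ZMod n) (ZMod n) ℝ :=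
  Matrix.of fun i j => if j = i + 1 ∨ j = i - 1 then 1 else 0

/-- The permutation polytope `DP_n = conv{M_σ : σ ∈ D_n} ⊆ ℝ^{n×n}`. -/
def DP : Set (Matrix (ZMod n) (ZMod n) ℝ) :=
  convexHull ℝ {M | ∃ σ ∈ dihedral n, M = permMat n σ}

/-- The cyclic shift matrix `R`. -/
def Rmat : Matrix (ZMod n) (ZMod n) ℝ := Matrix.of fun i j => if j = i + 1 then 1 else 0

/-- The `2n` rows of `W = [[I,...,I],[I,R,...,R^{n-1}]]`, viewed as vectors in
`ℝ^{n²} = Matrix (ZMod n) (ZMod n) ℝ`; the first matrix coordinate is the block index. -/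
def Wrow : Bool × ZMod n → Matrix (ZMod n) (ZMod n) ℝ
  | (false, k) => Matrix.of fun _ j => if j = k then 1 else 0
  | (true, k) => Matrix.of fun b j => (Rmat n ^ b.val) k j

/-- The polytope `Q_n ⊆ ℝ^{n²}`. -/
def Qpoly : Set (Matrix (ZMod n) (ZMod n) ℝ) := convexHull ℝ (Set.range (Wrow n))

/-- A point of `ℝ^{n²}` is a lattice point if all its coordinates are integers. -/
def IsInt (x : Matrix (ZMod n) (ZMod n) ℝ) : Prop := ∀ b j, ∃ z : ℤ, x b j = (z : ℝ)

/-- The `n + (n-1)(n-2)` linear functionals (as coefficient vectors): for each block `l`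
the block-sum functional, and for each `0 ≤ j ≤ n-2`, `0 ≤ k ≤ n-3` the functional
`x_{k,j} - x_{k+1,j} - x_{k+1,j+1} + x_{k+2,j+1}`. -/
def affEqns (n : ℕ) [NeZero n] : ZMod n ⊕ (Fin (n - 1) × Fin (n - 2)) → Matrix (ZMod n) (ZMod n) ℝ
  | .inl l => Matrix.of fun b _ => if b = l then (1 : ℝ) else 0
  | .inr (j, k) => Matrix.of fun b i =>
      (if b = ((k : ℕ) : ZMod n) ∧ i = ((j : ℕ) : ZMod n) then (1 : ℝ) else 0)
      - (if b = ((k : ℕ) : ZMod n) + 1 ∧ i = ((j : ℕ) : ZMod n) then 1 else 0)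
      - (if b = ((k : ℕ) : ZMod n) + 1 ∧ i = ((j : ℕ) : ZMod n) + 1 then 1 else 0)
      + (if b = ((k : ℕ) : ZMod n) + 2 ∧ i = ((j : ℕ) : ZMod n) + 1 then 1 else 0)


section QAHhelpers

lemma QAH_Rpow (m : ℕ) (i j : ZMod n) : (Rmat n ^ m) i j = if j = i + m then 1 else 0 := by
  induction m generalizing j with
  | zero => simp [Matrix.one_apply, eq_comm]
  | succ m ih =>
    rw [pow_succ, Matrix.mul_apply]
    simp only [ih]
    simp only [Rmat, Matrix.of_apply, ite_mul, one_mul, zero_mul]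
    rw [Finset.sum_ite_eq' univ (i + (m:ZMod n))]
    push_cast
    simp [add_assoc]

lemma QAH_castval (a : ZMod n) : ((a.val : ℕ) : ZMod n) = a := by
  simp [ZMod.natCast_val, ZMod.cast_id]

lemma QAH_cast_iff (m : ℕ) (hm : m ≤ n) (k : Fin m) (a : ZMod n) :
    a = ((k : ℕ) : ZMod n) ↔ a.val = (k : ℕ) := by
  constructor
  · rintro rfl; exact ZMod.val_cast_of_lt (lt_of_lt_of_le k.2 hm)
  · intro h; rw [← QAH_castval n a, h]

lemma QAH_Wrow_true (k b j : ZMod n) : Wrow n (true, k) b j = if j = k + b then 1 else 0 := by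
  show (Rmat n ^ b.val) k j = _
  rw [QAH_Rpow, QAH_castval]

lemma QAH_Wrow_false (k b j : ZMod n) : Wrow n (false, k) b j = if j = k then 1 else 0 := rfl

/-- extension of a coefficient family on `Fin (n-1) × Fin (n-2)` to `ZMod n × ZMod n`. -/
def QAH_Gf (g2 : Fin (n - 1) × Fin (n - 2) → ℝ) (b i : ZMod n) : ℝ :=
  if h : b.val < n - 2 ∧ i.val < n - 1 then g2 (⟨i.val, h.2⟩, ⟨b.val, h.1⟩) else 0

lemma QAH_sumG (hn : 3 ≤ n) (g2 : Fin (n - 1) × Fin (n - 2) → ℝ) (b i : ZMod n) :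
    ∑ p : Fin (n - 1) × Fin (n - 2),
      (if b = ((p.2 : ℕ) : ZMod n) ∧ i = ((p.1 : ℕ) : ZMod n) then g2 p else 0)
      = QAH_Gf n g2 b i := by
  unfold QAH_Gf
  split_ifs with h
  · rw [Finset.sum_eq_single (⟨⟨i.val, h.2⟩, ⟨b.val, h.1⟩⟩ : Fin (n-1) × Fin (n-2))]
    · rw [if_pos ⟨(QAH_castval n b).symm, (QAH_castval n i).symm⟩]
    · rintro ⟨j', k'⟩ - hne
      rw [if_neg]
      rintro ⟨h1, h2⟩
      rw [QAH_cast_iff n (n-2) (by omega) k' b] at h1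
      rw [QAH_cast_iff n (n-1) (by omega) j' i] at h2
      exact hne (by simp [Prod.ext_iff, Fin.ext_iff, ← h1, ← h2])
    · intro h; exact absurd (Finset.mem_univ _) h
  · refine Finset.sum_eq_zero fun p _ => ?_
    rw [if_neg]
    rintro ⟨h1, h2⟩
    rw [QAH_cast_iff n (n-2) (by omega) p.2 b] at h1
    rw [QAH_cast_iff n (n-1) (by omega) p.1 i] at h2
    exact h ⟨h1 ▸ p.2.2, h2 ▸ p.1.2⟩

lemma QAH_sumG' (hn : 3 ≤ n) (g2 : Fin (n - 1) × Fin (n - 2) → ℝ) (b i c d : ZMod n) :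
    ∑ p : Fin (n - 1) × Fin (n - 2),
      (if b = ((p.2 : ℕ) : ZMod n) + c ∧ i = ((p.1 : ℕ) : ZMod n) + d then g2 p else 0)
      = QAH_Gf n g2 (b - c) (i - d) := by
  rw [← QAH_sumG n hn g2 (b - c) (i - d)]
  exact Finset.sum_congr rfl fun p _ =>
    if_congr (and_congr sub_eq_iff_eq_add.symm sub_eq_iff_eq_add.symm) rfl rfl

lemma QAH_affEqns_inr_apply (p : Fin (n-1) × Fin (n-2)) (b i : ZMod n) :
    affEqns n (.inr p) b i =
      (if b = ((p.2 : ℕ) : ZMod n) ∧ i = ((p.1 : ℕ) : ZMod n) then (1:ℝ) else 0)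
      - (if b = ((p.2 : ℕ) : ZMod n) + 1 ∧ i = ((p.1 : ℕ) : ZMod n) then 1 else 0)
      - (if b = ((p.2 : ℕ) : ZMod n) + 1 ∧ i = ((p.1 : ℕ) : ZMod n) + 1 then 1 else 0)
      + (if b = ((p.2 : ℕ) : ZMod n) + 2 ∧ i = ((p.1 : ℕ) : ZMod n) + 1 then 1 else 0) := by
  obtain ⟨j, k⟩ := p; rfl

lemma QAH_sumGc (hn : 3 ≤ n) (g2 : Fin (n - 1) × Fin (n - 2) → ℝ) (b i c : ZMod n) :
    ∑ p : Fin (n - 1) × Fin (n - 2),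
      (if b = ((p.2 : ℕ) : ZMod n) + c ∧ i = ((p.1 : ℕ) : ZMod n) then g2 p else 0)
      = QAH_Gf n g2 (b - c) i := by
  rw [← QAH_sumG n hn g2 (b - c) i]
  exact Finset.sum_congr rfl fun p _ =>
    if_congr (and_congr sub_eq_iff_eq_add.symm Iff.rfl) rfl rfl

lemma QAH_eval (hn : 3 ≤ n) (g : (ZMod n ⊕ (Fin (n-1) × Fin (n-2))) → ℝ) (b i : ZMod n) :
    (∑ s, g s • affEqns n s) b i
      = g (.inl b) + QAH_Gf n (fun p => g (.inr p)) b i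
        - QAH_Gf n (fun p => g (.inr p)) (b - 1) i
        - QAH_Gf n (fun p => g (.inr p)) (b - 1) (i - 1)
        + QAH_Gf n (fun p => g (.inr p)) (b - 2) (i - 1) := by
  rw [Matrix.sum_apply, Fintype.sum_sum_type]
  have h1 : ∑ l : ZMod n, (g (.inl l) • affEqns n (.inl l)) b i = g (.inl b) := by
    simp only [affEqns, Pi.smul_apply, Matrix.smul_apply, Matrix.of_apply, smul_eq_mul,
      mul_ite, mul_one, mul_zero]
    rw [Finset.sum_ite_eq univ b (fun l => g (.inl l))]
    simp
  have h2 : ∑ p : Fin (n-1) × Fin (n-2), (g (.inr p) • affEqns n (.inr p)) b i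
      = QAH_Gf n (fun p => g (.inr p)) b i
        - QAH_Gf n (fun p => g (.inr p)) (b - 1) i
        - QAH_Gf n (fun p => g (.inr p)) (b - 1) (i - 1)
        + QAH_Gf n (fun p => g (.inr p)) (b - 2) (i - 1) := by
    simp only [Matrix.smul_apply, QAH_affEqns_inr_apply, smul_eq_mul, mul_sub, mul_add,
      mul_ite, mul_one, mul_zero]
    rw [Finset.sum_add_distrib, Finset.sum_sub_distrib, Finset.sum_sub_distrib,
      QAH_sumG n hn (fun p => g (.inr p)) b i,
      QAH_sumGc n hn (fun p => g (.inr p)) b i 1,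
      QAH_sumG' n hn (fun p => g (.inr p)) b i 1 1,
      QAH_sumG' n hn (fun p => g (.inr p)) b i 2 1]
  rw [h1, h2]; ring

lemma QAH_indep (hn : 3 ≤ n) : LinearIndependent ℝ (affEqns n) := by
  rw [Fintype.linearIndependent_iff]
  intro g hg
  set G := QAH_Gf n (fun p => g (.inr p)) with hGdef
  have E : ∀ b i : ZMod n,
      g (.inl b) + G b i - G (b-1) i - G (b-1) (i-1) + G (b-2) (i-1) = 0 := by
    intro b i
    have h0 : (∑ s, g s • affEqns n s) b i = 0 := by rw [hg]; rfl
    rw [QAH_eval n hn g b i] at h0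
    exact h0
  have hnegval : (-1 : ZMod n).val = n - 1 := by
    have h1 : (-1 : ZMod n) = ((n-1 : ℕ) : ZMod n) := by
      push_cast [Nat.cast_sub (by omega : 1 ≤ n)]
      simp [ZMod.natCast_self]
    rw [h1]
    exact ZMod.val_cast_of_lt (by omega)
  have hGneg : ∀ b : ZMod n, G b ((0:ZMod n) - 1) = 0 := by
    intro b
    rw [hGdef]; unfold QAH_Gf
    rw [dif_neg]
    rw [zero_sub, hnegval]
    rintro ⟨-, h2⟩
    omega
  have key : ∀ d (k : Fin (n-2)), n - 2 ≤ (k:ℕ) + d → ∀ j, g (.inr (j,k)) = 0 := by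
    intro d
    induction d with
    | zero => intro k hk j; exact absurd k.2 (by omega)
    | succ d IH =>
      intro k hk j
      have hK : (k:ℕ) < n - 2 := k.2
      have hGvan : ∀ m : ℕ, (k:ℕ) < m → m < n → ∀ i : ZMod n, G ((m:ZMod n)) i = 0 := by
        intro m hm1 hm2 i
        rw [hGdef]; unfold QAH_Gf
        split_ifs with h
        · exact IH ⟨((m:ZMod n)).val, h.1⟩
            (by simp only [ZMod.val_cast_of_lt hm2]; omega) _
        · rfl
      have e1 : (((k:ℕ)+2 : ℕ):ZMod n) - 1 = (((k:ℕ)+1 : ℕ):ZMod n) := by push_cast; ring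
      have e0 : (((k:ℕ)+2 : ℕ):ZMod n) - 2 = (((k:ℕ) : ℕ):ZMod n) := by push_cast; ring
      have hinl : g (.inl ((((k:ℕ)+2 : ℕ)) : ZMod n)) = 0 := by
        have h := E ((((k:ℕ)+2 : ℕ)):ZMod n) 0
        rw [e1, e0] at h
        simp only [hGvan ((k:ℕ)+2) (by omega) (by omega),
          hGvan ((k:ℕ)+1) (by omega) (by omega), hGneg] at h
        linarith
      have hlast : G (((k:ℕ):ℕ):ZMod n) (((j:ℕ)):ZMod n) = g (.inr (j,k)) := by
        have hj : (((j:ℕ)):ZMod n).val = (j:ℕ) := ZMod.val_cast_of_lt (by omega)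
        have hk2 : (((k:ℕ)):ZMod n).val = (k:ℕ) := ZMod.val_cast_of_lt (by omega)
        have hcond : ((((k:ℕ):ℕ)):ZMod n).val < n-2 ∧ ((((j:ℕ)):ZMod n)).val < n-1 :=
          ⟨by rw [hk2]; omega, by rw [hj]; omega⟩
        rw [hGdef]; unfold QAH_Gf
        rw [dif_pos hcond]
        congr 1
        exact Prod.ext (Fin.ext hj) (Fin.ext hk2)
      have ej : ((((j:ℕ)):ZMod n) + 1) - 1 = (((j:ℕ)):ZMod n) := by ring
      have h := E ((((k:ℕ)+2 : ℕ)):ZMod n) ((((j:ℕ)):ZMod n) + 1)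
      rw [e1, e0, ej] at h
      simp only [hGvan ((k:ℕ)+2) (by omega) (by omega),
        hGvan ((k:ℕ)+1) (by omega) (by omega), hinl, hlast] at h
      linarith
  have hinr : ∀ p : Fin (n-1) × Fin (n-2), g (.inr p) = 0 := fun p => key n p.2 (by omega) p.1
  have hG0 : ∀ b i, G b i = 0 := by
    intro b i; rw [hGdef]; unfold QAH_Gf; split_ifs
    · exact hinr _
    · rfl
  have hinlall : ∀ l, g (.inl l) = 0 := by
    intro l
    have h := E l 0
    simp only [hG0] at h
    linarith
  rintro (l | p)
  · exact hinlall l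
  · exact hinr p

end QAHhelpers

/-- every vertex of `Q_n` satisfies the `n` block-sum equations and the
`(n-1)(n-2)` equations `A_{j,k}`, and these linear equations are linearly independent. -/
theorem Q_affineHull_equations (n : ℕ) [NeZero n] (hn : 3 ≤ n) :
    (∀ p : Bool × ZMod n,
      (∀ l : ZMod n, ∑ j, Wrow n p l j = 1) ∧
      (∀ (j : Fin (n - 1)) (k : Fin (n - 2)),
        Wrow n p ((k : ℕ) : ZMod n) ((j : ℕ) : ZMod n)
        - Wrow n p (((k : ℕ) : ZMod n) + 1) ((j : ℕ) : ZMod n)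
        - Wrow n p (((k : ℕ) : ZMod n) + 1) (((j : ℕ) : ZMod n) + 1)
        + Wrow n p (((k : ℕ) : ZMod n) + 2) (((j : ℕ) : ZMod n) + 1) = 0)) ∧
    LinearIndependent ℝ (affEqns n) := by
  refine ⟨fun p => ⟨?_, ?_⟩, QAH_indep n hn⟩
  · intro l
    obtain ⟨b, k⟩ := p
    cases b
    · simp only [QAH_Wrow_false]
      rw [Finset.sum_ite_eq' univ k (fun _ => (1:ℝ))]; simp
    · simp only [QAH_Wrow_true]
      rw [Finset.sum_ite_eq' univ (k + l) (fun _ => (1:ℝ))]; simp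
  · intro j k
    obtain ⟨b, k0⟩ := p
    cases b
    · simp only [QAH_Wrow_false]; ring
    · simp only [QAH_Wrow_true]
      rw [show (k0 + (((k:ℕ):ZMod n) + 2)) = (k0 + (((k:ℕ):ZMod n) + 1)) + 1 by ring,
          show (k0 + (((k:ℕ):ZMod n) + 1)) = (k0 + ((k:ℕ):ZMod n)) + 1 by ring]
      simp only [add_left_inj]
      ring
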